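/- For a set L of graphs with no sources, graphs G₁ and G₂ are equivalent under the syntactic congruence of L in the HR graph algebra if and only if they have the same sort and for every graph G and every finite sort τ: restrict_τ(G₁ ∥ G) ∈ L ⟺ restrict_τ(G₂ ∥ G) ∈ L. -/

import Mathlib

set_option autoImplicit false

namespace GraphCF

noncomputable section

/-! ### Concrete graphs

A concrete graph over an alphabet `Lab` of edge labels (with arities `ar`):
vertices `Fin n`, edges `Fin m`, each edge carrying a label and the sequence of
attached vertices, and an assignment of the source labels in the sort `srt`
(a finite set of natural numbers) to vertices.  Graphs in the paper are
isomorphism classes of concrete graphs; we work with concrete graphs together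
with the isomorphism relation `GIso`. -/
structure CG (Lab : Type) (ar : Lab → ℕ) : Type where
  n : ℕ
  m : ℕ
  edg : Fin m → (a : Lab) × (Fin (ar a) → Fin n)
  srt : Finset ℕ
  src : {s : ℕ // s ∈ srt} → Fin n

variable {Lab : Type} {ar : Lab → ℕ}

instance quotFinite {α : Type} [Finite α] (r : α → α → Prop) : Finite (Quot r) :=
  Finite.of_surjective (Quot.mk r) fun q => Quot.exists_rep q

/-- The graph `0_τ` consisting only of sources, one for each label in `τ`. -/
def czero (τ : Finset ℕ) : CG Lab ar where
  n := τ.card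
  m := 0
  edg e := Fin.elim0 e
  srt := τ
  src s := τ.equivFin ⟨s.1, s.2⟩

/-- The single-edge graph `a_(s₁,…,s_k)`. -/
def cedge (a : Lab) (s : Fin (ar a) → ℕ) : CG Lab ar where
  n := (Finset.image s Finset.univ).card
  m := 1
  edg _ := ⟨a, fun i => (Finset.image s Finset.univ).equivFin
    ⟨s i, Finset.mem_image_of_mem s (Finset.mem_univ i)⟩⟩
  srt := Finset.image s Finset.univ
  src t := (Finset.image s Finset.univ).equivFin ⟨t.1, t.2⟩

/-- Restriction of sources: keep only the source labels in `τ`. -/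
def crestrict (τ : Finset ℕ) (G : CG Lab ar) : CG Lab ar where
  n := G.n
  m := G.m
  edg := G.edg
  srt := G.srt ∩ τ
  src s := G.src ⟨s.1, (Finset.mem_inter.mp s.2).1⟩

/-- Renaming of sources along a permutation `α`; the new sort is `α⁻¹(srt)`. -/
def crename (α : Equiv.Perm ℕ) (G : CG Lab ar) : CG Lab ar where
  n := G.n
  m := G.m
  edg := G.edg
  srt := G.srt.image (α.symm : ℕ → ℕ)
  src s := G.src ⟨α s.1, by
    obtain ⟨y, hy, he⟩ := Finset.mem_image.mp s.2
    rw [← he, Equiv.apply_symm_apply]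
    exact hy⟩

/-- The fusion relation used to define parallel composition: sources of the two
graphs carrying the same label are identified. -/
def fuseRel (G₁ G₂ : CG Lab ar) :
    (Fin G₁.n ⊕ Fin G₂.n) → (Fin G₁.n ⊕ Fin G₂.n) → Prop :=
  fun x y => ∃ (s : ℕ) (h₁ : s ∈ G₁.srt) (h₂ : s ∈ G₂.srt),
    x = Sum.inl (G₁.src ⟨s, h₁⟩) ∧ y = Sum.inr (G₂.src ⟨s, h₂⟩)

/-- Parallel composition `G₁ ∥ G₂`: disjoint union with fusion of equally
labeled sources; the sort is the union of the sorts. -/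
def ccomp (G₁ G₂ : CG Lab ar) : CG Lab ar :=
  let e := Finite.equivFin (Quot (fuseRel G₁ G₂))
  { n := Nat.card (Quot (fuseRel G₁ G₂))
    m := G₁.m + G₂.m
    edg := fun i =>
      match finSumFinEquiv.symm i with
      | Sum.inl e₁ => ⟨(G₁.edg e₁).1, fun j => e (Quot.mk _ (Sum.inl ((G₁.edg e₁).2 j)))⟩
      | Sum.inr e₂ => ⟨(G₂.edg e₂).1, fun j => e (Quot.mk _ (Sum.inr ((G₂.edg e₂).2 j)))⟩
    srt := G₁.srt ∪ G₂.srt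
    src := fun s =>
      if h : s.1 ∈ G₁.srt then e (Quot.mk _ (Sum.inl (G₁.src ⟨s.1, h⟩)))
      else e (Quot.mk _ (Sum.inr (G₂.src ⟨s.1, (Finset.mem_union.mp s.2).resolve_left h⟩))) }

theorem crestrict_srt (τ : Finset ℕ) (G : CG Lab ar) :
    (crestrict τ G).srt = G.srt ∩ τ := rfl

theorem crename_srt (α : Equiv.Perm ℕ) (G : CG Lab ar) :
    (crename α G).srt = G.srt.image (α.symm : ℕ → ℕ) := rfl

theorem ccomp_srt (G₁ G₂ : CG Lab ar) : (ccomp G₁ G₂).srt = G₁.srt ∪ G₂.srt := rfl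

/-- Isomorphism of concrete graphs. -/
def GIso (G₁ G₂ : CG Lab ar) : Prop :=
  G₁.srt = G₂.srt ∧
  ∃ (ev : Fin G₁.n ≃ Fin G₂.n) (ee : Fin G₁.m ≃ Fin G₂.m),
    (∀ e, (G₂.edg (ee e)).1 = (G₁.edg e).1 ∧
      HEq (G₂.edg (ee e)).2 (fun i => ev ((G₁.edg e).2 i))) ∧
    (∀ (s : ℕ) (h₁ : s ∈ G₁.srt) (h₂ : s ∈ G₂.srt),
      ev (G₁.src ⟨s, h₁⟩) = G₂.src ⟨s, h₂⟩)

def IsoClosed (L : Set (CG Lab ar)) : Prop :=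
  ∀ G₁ G₂ : CG Lab ar, GIso G₁ G₂ → G₁ ∈ L → G₂ ∈ L

def isoClosure (L : Set (CG Lab ar)) : Set (CG Lab ar) :=
  {G | ∃ G' ∈ L, GIso G' G}

/-- `α` is a `τ`-permutation: it fixes every label outside `τ`. -/
def IsTauPerm (τ : Finset ℕ) (α : Equiv.Perm ℕ) : Prop := ∀ x, x ∉ τ → α x = x

/-- Finite permutations of the source labels. -/
def IsFinPerm (α : Equiv.Perm ℕ) : Prop := ∃ τ : Finset ℕ, IsTauPerm τ α

theorem crename_srt_subset {τ : Finset ℕ} {α : Equiv.Perm ℕ} (hα : IsTauPerm τ α)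
    {G : CG Lab ar} (h : G.srt ⊆ τ) : (crename α G).srt ⊆ τ := by
  intro x hx
  obtain ⟨y, hy, he⟩ := Finset.mem_image.mp hx
  subst he
  by_contra hc
  have h1 := hα _ hc
  rw [Equiv.apply_symm_apply] at h1
  exact hc (h1 ▸ h hy)

/-! ### Ground HR terms -/

/-- Ground terms over the HR signature. -/
inductive HRT (Lab : Type) (ar : Lab → ℕ) : Type
  | zero (τ : Finset ℕ)
  | edge (a : Lab) (s : Fin (ar a) → ℕ)
  | restrict (τ : Finset ℕ) (t : HRT Lab ar)
  | rename (α : Equiv.Perm ℕ) (hα : IsFinPerm α) (t : HRT Lab ar)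
  | comp (t₁ t₂ : HRT Lab ar)

/-- The value of a ground HR term in the graph algebra. -/
def HRT.val : HRT Lab ar → CG Lab ar
  | .zero τ => czero τ
  | .edge a s => cedge a s
  | .restrict τ t => crestrict τ t.val
  | .rename α _ t => crename α t.val
  | .comp t₁ t₂ => ccomp t₁.val t₂.val

/-- The term uses only source labels from `τ`. -/
def HRT.usesOnly (τ : Finset ℕ) : HRT Lab ar → Prop
  | .zero τ' => τ' ⊆ τ
  | .edge _ s => ∀ i, s i ∈ τ
  | .restrict τ' t => τ' ⊆ τ ∧ t.usesOnly τ
  | .rename α _ t => IsTauPerm τ α ∧ t.usesOnly τ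
  | .comp t₁ t₂ => t₁.usesOnly τ ∧ t₂.usesOnly τ

/-- The set of graphs generated by ground terms over the `τ`-restricted
HR signature (up to isomorphism). -/
def genGraphs (Lab : Type) (ar : Lab → ℕ) (τ : Finset ℕ) : Set (CG Lab ar) :=
  {G | ∃ t : HRT Lab ar, t.usesOnly τ ∧ GIso t.val G}

/-! ### HR grammars -/

/-- HR terms with nonterminal (set) variables from `N`. -/
inductive HRTV (Lab : Type) (ar : Lab → ℕ) (N : Type) : Type
  | var (X : N)
  | zero (τ : Finset ℕ)
  | edge (a : Lab) (s : Fin (ar a) → ℕ)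
  | restrict (τ : Finset ℕ) (t : HRTV Lab ar N)
  | rename (α : Equiv.Perm ℕ) (hα : IsFinPerm α) (t : HRTV Lab ar N)
  | comp (t₁ t₂ : HRTV Lab ar N)

/-- Evaluation of a term with set variables, with regard to an assignment `S`
of sets of graphs to the nonterminals. -/
def HRTV.evalSet {N : Type} (S : N → Set (CG Lab ar)) : HRTV Lab ar N → Set (CG Lab ar)
  | .var X => S X
  | .zero τ => {czero τ}
  | .edge a s => {cedge a s}
  | .restrict τ t => crestrict τ '' t.evalSet S
  | .rename α _ t => crename α '' t.evalSet S
  | .comp t₁ t₂ => {G | ∃ G₁ ∈ t₁.evalSet S, ∃ G₂ ∈ t₂.evalSet S, G = ccomp G₁ G₂}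

def HRTV.usesOnly {N : Type} (τ : Finset ℕ) : HRTV Lab ar N → Prop
  | .var _ => True
  | .zero τ' => τ' ⊆ τ
  | .edge _ s => ∀ i, s i ∈ τ
  | .restrict τ' t => τ' ⊆ τ ∧ t.usesOnly τ
  | .rename α _ t => IsTauPerm τ α ∧ t.usesOnly τ
  | .comp t₁ t₂ => t₁.usesOnly τ ∧ t₂.usesOnly τ

/-- A grammar: a finite list of rules `X → t`. -/
abbrev Grammar (Lab : Type) (ar : Lab → ℕ) (N : Type) : Type := List (N × HRTV Lab ar N)

def IsSolution {N : Type} (Γ : Grammar Lab ar N) (S : N → Set (CG Lab ar)) : Prop :=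
  ∀ r ∈ Γ, HRTV.evalSet S r.2 ⊆ S r.1

/-- The component of the least solution of `Γ` at the nonterminal `X`
(the least solution is the pointwise intersection of all solutions). -/
def langOf {N : Type} (Γ : Grammar Lab ar N) (X : N) : Set (CG Lab ar) :=
  {G | ∀ S : N → Set (CG Lab ar), IsSolution Γ S → G ∈ S X}

/-- `L` is context-free for a grammar over the `τ`-restricted HR signature. -/
def ContextFreeT (Lab : Type) (ar : Lab → ℕ) (τ : Finset ℕ) (L : Set (CG Lab ar)) : Prop :=
  ∃ (N : Type) (_ : Finite N) (Γ : Grammar Lab ar N) (X : N),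
    (∀ r ∈ Γ, HRTV.usesOnly τ r.2) ∧ L = isoClosure (langOf Γ X)

/-- `L` is context-free: a component of the least solution of a grammar of
recursive equations over HR operations. -/
def ContextFree (Lab : Type) (ar : Lab → ℕ) (L : Set (CG Lab ar)) : Prop :=
  ∃ (N : Type) (_ : Finite N) (Γ : Grammar Lab ar N) (X : N),
    L = isoClosure (langOf Γ X)

/-! ### Contexts and the syntactic congruence of the HR algebra -/

/-- First-order HR contexts: terms built from a variable (`hole`), arbitrary
graph parameters (`const`) and the HR operations. -/
inductive HRCtx (Lab : Type) (ar : Lab → ℕ) : Type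
  | hole
  | const (G : CG Lab ar)
  | zero (τ : Finset ℕ)
  | edge (a : Lab) (s : Fin (ar a) → ℕ)
  | restrict (τ : Finset ℕ) (c : HRCtx Lab ar)
  | rename (α : Equiv.Perm ℕ) (hα : IsFinPerm α) (c : HRCtx Lab ar)
  | comp (c₁ c₂ : HRCtx Lab ar)

def HRCtx.apply : HRCtx Lab ar → CG Lab ar → CG Lab ar
  | .hole, G => G
  | .const H, _ => H
  | .zero τ, _ => czero τ
  | .edge a s, _ => cedge a s
  | .restrict τ c, G => crestrict τ (c.apply G)
  | .rename α _ c, G => crename α (c.apply G)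
  | .comp c₁ c₂, G => ccomp (c₁.apply G) (c₂.apply G)

/-- The syntactic congruence of `L` in the HR graph algebra. -/
def SynCongHR (L : Set (CG Lab ar)) (G₁ G₂ : CG Lab ar) : Prop :=
  G₁.srt = G₂.srt ∧ ∀ c : HRCtx Lab ar, (c.apply G₁ ∈ L ↔ c.apply G₂ ∈ L)

/-- The context uses only source labels from `τ` (and parameters of sort `⊆ τ`). -/
def HRCtx.usesOnly (τ : Finset ℕ) : HRCtx Lab ar → Prop
  | .hole => True
  | .const G => G.srt ⊆ τ
  | .zero τ' => τ' ⊆ τ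
  | .edge _ s => ∀ i, s i ∈ τ
  | .restrict τ' c => τ' ⊆ τ ∧ c.usesOnly τ
  | .rename α _ c => IsTauPerm τ α ∧ c.usesOnly τ
  | .comp c₁ c₂ => c₁.usesOnly τ ∧ c₂.usesOnly τ

/-- The syntactic congruence of `L` in the finitely-sorted subalgebra `G^τ`. -/
def SynCongHRT (τ : Finset ℕ) (L : Set (CG Lab ar)) (G₁ G₂ : CG Lab ar) : Prop :=
  G₁.srt = G₂.srt ∧
  ∀ c : HRCtx Lab ar, c.usesOnly τ → (c.apply G₁ ∈ L ↔ c.apply G₂ ∈ L)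

/-! ### Congruence-based recognizability in the HR algebra -/

/-- A congruence of the HR graph algebra (on concrete graphs; it must contain
graph isomorphism, respect sorts and be compatible with all HR operations). -/
structure HRCongruence (Lab : Type) (ar : Lab → ℕ) : Type 1 where
  rel : CG Lab ar → CG Lab ar → Prop
  iseqv : Equivalence rel
  iso_le : ∀ G₁ G₂, GIso G₁ G₂ → rel G₁ G₂
  srt_eq : ∀ G₁ G₂, rel G₁ G₂ → G₁.srt = G₂.srt
  restrict_compat : ∀ (τ : Finset ℕ) G₁ G₂, rel G₁ G₂ →
    rel (crestrict τ G₁) (crestrict τ G₂)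
  rename_compat : ∀ (α : Equiv.Perm ℕ), IsFinPerm α → ∀ G₁ G₂, rel G₁ G₂ →
    rel (crename α G₁) (crename α G₂)
  comp_compat : ∀ G₁ G₂ H₁ H₂, rel G₁ H₁ → rel G₂ H₂ →
    rel (ccomp G₁ G₂) (ccomp H₁ H₂)

/-- Locally finite: finitely many classes of each sort. -/
def HRCongruence.LocFin (C : HRCongruence Lab ar) : Prop :=
  ∀ τ : Finset ℕ,
    Finite (Quot (fun a b : {G : CG Lab ar // G.srt = τ} => C.rel a.1 b.1))

def HRCongruence.Saturates (C : HRCongruence Lab ar) (L : Set (CG Lab ar)) : Prop :=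
  ∀ G₁ G₂, C.rel G₁ G₂ → (G₁ ∈ L ↔ G₂ ∈ L)

/-- `L` is recognizable in the HR graph algebra: saturated by a locally finite
congruence. -/
def RecogHR (L : Set (CG Lab ar)) : Prop :=
  ∃ C : HRCongruence Lab ar, C.Saturates L ∧ C.LocFin

/-- graphs of sort included in `τ` -/
abbrev CGT (Lab : Type) (ar : Lab → ℕ) (τ : Finset ℕ) : Type :=
  {G : CG Lab ar // G.srt ⊆ τ}

def subRestrict {τ : Finset ℕ} (τ' : Finset ℕ) (G : CGT Lab ar τ) : CGT Lab ar τ :=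
  ⟨crestrict τ' G.1, by rw [crestrict_srt]; exact Finset.Subset.trans Finset.inter_subset_left G.2⟩

def subRename {τ : Finset ℕ} (α : Equiv.Perm ℕ) (hα : IsTauPerm τ α)
    (G : CGT Lab ar τ) : CGT Lab ar τ :=
  ⟨crename α G.1, crename_srt_subset hα G.2⟩

def subComp {τ : Finset ℕ} (G₁ G₂ : CGT Lab ar τ) : CGT Lab ar τ :=
  ⟨ccomp G₁.1 G₂.1, by rw [ccomp_srt]; exact Finset.union_subset G₁.2 G₂.2⟩

/-- A congruence of the finitely-sorted subalgebra `G^τ`. -/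
structure HRCongruenceT (Lab : Type) (ar : Lab → ℕ) (τ : Finset ℕ) : Type 1 where
  rel : CGT Lab ar τ → CGT Lab ar τ → Prop
  iseqv : Equivalence rel
  iso_le : ∀ G₁ G₂ : CGT Lab ar τ, GIso G₁.1 G₂.1 → rel G₁ G₂
  srt_eq : ∀ G₁ G₂ : CGT Lab ar τ, rel G₁ G₂ → G₁.1.srt = G₂.1.srt
  restrict_compat : ∀ (τ' : Finset ℕ), τ' ⊆ τ → ∀ G₁ G₂, rel G₁ G₂ →
    rel (subRestrict τ' G₁) (subRestrict τ' G₂)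
  rename_compat : ∀ (α : Equiv.Perm ℕ) (hα : IsTauPerm τ α), ∀ G₁ G₂, rel G₁ G₂ →
    rel (subRename α hα G₁) (subRename α hα G₂)
  comp_compat : ∀ G₁ G₂ H₁ H₂, rel G₁ H₁ → rel G₂ H₂ →
    rel (subComp G₁ G₂) (subComp H₁ H₂)

/-- `L` is recognizable in the finitely-sorted subalgebra `G^τ`: saturated by a
congruence of `G^τ` with finitely many classes. -/
def RecogHRT (τ : Finset ℕ) (L : Set (CG Lab ar)) : Prop :=
  ∃ C : HRCongruenceT Lab ar τ,
    (∀ G₁ G₂ : CGT Lab ar τ, C.rel G₁ G₂ → (G₁.1 ∈ L ↔ G₂.1 ∈ L)) ∧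
    Finite (Quot C.rel)

/-! ### Tree decompositions and tree-width -/

/-- A tree decomposition of a concrete graph `G`. -/
structure TreeDecomp (G : CG Lab ar) : Type 1 where
  ι : Type
  finι : Finite ι
  T : SimpleGraph ι
  isTree : T.IsTree
  root : ι
  bag : ι → Finset (Fin G.n)
  edges_covered : ∀ e : Fin G.m, ∃ x : ι, ∀ i, (G.edg e).2 i ∈ bag x
  vert_connected : ∀ v : Fin G.n, (T.induce {x : ι | v ∈ bag x}).Connected
  root_bag : ∀ s : {s : ℕ // s ∈ G.srt}, G.src s ∈ bag root

/-- `G` has tree-width at most `k`: it has a tree decomposition all of whose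
bags have at most `k+1` elements. -/
def TWle (G : CG Lab ar) (k : ℕ) : Prop :=
  ∃ td : TreeDecomp G, ∀ x, (td.bag x).card ≤ k + 1

/-! ### Trees -/

/-- Terms denoting trees over an alphabet `B1` of unary and `B2` of binary
edge labels: constants for unary labels, the `append` operations for binary
labels, and root-fusing composition. -/
inductive TTerm (B1 B2 : Type) : Type
  | leaf (c : B1)
  | append (b : B2) (t : TTerm B1 B2)
  | comp (t₁ t₂ : TTerm B1 B2)

/-- Arity function for tree edge labels. -/
def tAr {B1 B2 : Type} : B1 ⊕ B2 → ℕ := Sum.elim (fun _ => 1) (fun _ => 2)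

/-- The tree (as a graph with root source `0`) denoted by a tree term. -/
def treeEval {B1 B2 : Type} : TTerm B1 B2 → CG (B1 ⊕ B2) tAr
  | .leaf c => cedge (Sum.inl c) (fun _ => 0)
  | .append b t => crename (Equiv.swap 0 1)
      (crestrict {1} (ccomp (cedge (Sum.inr b) ![1, 0]) (treeEval t)))
  | .comp t₁ t₂ => ccomp (treeEval t₁) (treeEval t₂)

/-- Two tree terms denote the same tree. -/
def SameTree {B1 B2 : Type} (t u : TTerm B1 B2) : Prop :=
  GIso (treeEval t) (treeEval u)

/-- The height of (the tree denoted by) a tree term. -/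
def TTerm.height {B1 B2 : Type} : TTerm B1 B2 → ℕ
  | .leaf _ => 0
  | .append _ t => t.height + 1
  | .comp t₁ t₂ => max t₁.height t₂.height

/-- Iterated composition `x ∥ l₁ ∥ … ∥ l_n`. -/
def compList {B1 B2 : Type} (x : TTerm B1 B2) (l : List (TTerm B1 B2)) : TTerm B1 B2 :=
  l.foldl TTerm.comp x

/-- Equality of tree terms up to commutativity and associativity of `∥`. -/
inductive ACeq {B1 B2 : Type} : TTerm B1 B2 → TTerm B1 B2 → Prop
  | refl (t) : ACeq t t
  | symm {t u} : ACeq t u → ACeq u t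
  | trans {t u v} : ACeq t u → ACeq u v → ACeq t v
  | comm (t u) : ACeq (.comp t u) (.comp u t)
  | assoc (t u v) : ACeq (.comp (.comp t u) v) (.comp t (.comp u v))
  | congr_append (b) {t u} : ACeq t u → ACeq (.append b t) (.append b u)
  | congr_comp {t u t' u'} : ACeq t t' → ACeq u u' → ACeq (.comp t u) (.comp t' u')

/-! ### Parse trees -/

/-- Unary parse-tree edge labels: the HR constants. -/
inductive PUn (Lab : Type) (ar : Lab → ℕ) : Type
  | zero (τ : Finset ℕ)
  | edge (a : Lab) (s : Fin (ar a) → ℕ)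

/-- Binary parse-tree edge labels: restriction and renaming. -/
inductive PBin : Type
  | restrict (τ : Finset ℕ)
  | rename (α : Equiv.Perm ℕ) (hα : IsFinPerm α)

/-- Parse trees (as tree terms over the parse alphabet). -/
abbrev PTerm (Lab : Type) (ar : Lab → ℕ) : Type := TTerm (PUn Lab ar) PBin

/-- The canonical evaluation of a parse tree: interpret the edge labels as HR
operations in the graph algebra. -/
def pval : PTerm Lab ar → CG Lab ar
  | .leaf (.zero τ) => czero τ
  | .leaf (.edge a s) => cedge a s
  | .append (.restrict τ) t => crestrict τ (pval t)
  | .append (.rename α _) t => crename α (pval t)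
  | .comp t₁ t₂ => ccomp (pval t₁) (pval t₂)

/-- The unary parse label uses only sources from `τ`. -/
def PUnOK (τ : Finset ℕ) : PUn Lab ar → Prop
  | .zero τ' => τ' ⊆ τ
  | .edge _ s => ∀ i, s i ∈ τ

/-- The binary parse label uses only sources from `τ`. -/
def PBinOK (τ : Finset ℕ) : PBin → Prop
  | .restrict τ' => τ' ⊆ τ
  | .rename α _ => IsTauPerm τ α

/-- The `τ`-restricted parse alphabet (unary part). -/
abbrev PUnT (Lab : Type) (ar : Lab → ℕ) (τ : Finset ℕ) : Type := {u : PUn Lab ar // PUnOK τ u}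
/-- The `τ`-restricted parse alphabet (binary part). -/
abbrev PBinT (τ : Finset ℕ) : Type := {b : PBin // PBinOK τ b}
/-- Parse trees over the `τ`-restricted parse alphabet. -/
abbrev PTermT (Lab : Type) (ar : Lab → ℕ) (τ : Finset ℕ) : Type :=
  TTerm (PUnT Lab ar τ) (PBinT τ)

/-- Relabeling of tree terms. -/
def TTerm.mapL {B1 B2 B1' B2' : Type} (f : B1 → B1') (g : B2 → B2') :
    TTerm B1 B2 → TTerm B1' B2'
  | .leaf c => .leaf (f c)
  | .append b t => .append (g b) (t.mapL f g)
  | .comp t₁ t₂ => .comp (t₁.mapL f g) (t₂.mapL f g)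

/-- Inclusion of `τ`-restricted parse trees into all parse trees. -/
def ptInj {τ : Finset ℕ} (t : PTermT Lab ar τ) : PTerm Lab ar :=
  t.mapL Subtype.val Subtype.val

/-! ### Recognizability for sets of (parse) trees -/

/-- A congruence of the tree algebra `T(B_parse)` (over the universe of parse
trees): contains `SameTree` and is compatible with all tree operations. -/
structure TCong (B1 B2 : Type) : Type 1 where
  rel : TTerm B1 B2 → TTerm B1 B2 → Prop
  iseqv : Equivalence rel
  same_le : ∀ t u, SameTree t u → rel t u
  append_compat : ∀ (b : B2) t u, rel t u → rel (.append b t) (.append b u)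
  comp_compat : ∀ t₁ t₂ u₁ u₂, rel t₁ u₁ → rel t₂ u₂ →
    rel (.comp t₁ t₂) (.comp u₁ u₂)

/-- `K` is recognizable in the tree algebra. -/
def RecogTree {B1 B2 : Type} (K : Set (TTerm B1 B2)) : Prop :=
  ∃ C : TCong B1 B2, (∀ t u, C.rel t u → (t ∈ K ↔ u ∈ K)) ∧ Finite (Quot C.rel)

/-- A congruence of the algebra of parse trees `P` (the HR signature
interpreted over trees): contains `SameTree` and is compatible with the
HR operations on trees. -/
structure PCong (Lab : Type) (ar : Lab → ℕ) : Type 1 where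
  rel : PTerm Lab ar → PTerm Lab ar → Prop
  iseqv : Equivalence rel
  same_le : ∀ t u, SameTree t u → rel t u
  restrict_compat : ∀ (τ : Finset ℕ) t u, rel t u →
    rel (.append (PBin.restrict τ) t) (.append (PBin.restrict τ) u)
  rename_compat : ∀ (α : Equiv.Perm ℕ) (hα : IsFinPerm α) t u, rel t u →
    rel (.append (PBin.rename α hα) t) (.append (PBin.rename α hα) u)
  comp_compat : ∀ t₁ t₂ u₁ u₂, rel t₁ u₁ → rel t₂ u₂ →
    rel (.comp t₁ t₂) (.comp u₁ u₂)

/-- `K` is recognizable in the algebra of parse trees. -/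
def RecogP (K : Set (PTerm Lab ar)) : Prop :=
  ∃ C : PCong Lab ar, (∀ t u, C.rel t u → (t ∈ K ↔ u ∈ K)) ∧ Finite (Quot C.rel)


/-!
The forward direction is the special context `restrict_τ(□ ∥ G)`. For the converse, relate `X`
and `Y` when they have the same sort and `restrict_∅(X ∥ G) ∈ L ↔ restrict_∅(Y ∥ G) ∈ L` for all
`G`; as `L` is sourceless, `restrict_τ(X ∥ G)` can only lie in `L` when it coincides with
`restrict_∅(X ∥ G)`, so this is the relation on the right-hand side. It is preserved by the HR
operations because they can be pushed into the partner `G`: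
`restrict_∅(restrict_σ X ∥ G) = restrict_∅(X ∥ rename_α G)` for a permutation `α` fixing the
labels of `X` in `σ` and sending its other labels outside the sort of `G`,
`restrict_∅(rename_β X ∥ G) = restrict_∅(X ∥ rename_β⁻¹ G)`, and `∥` is handled by associativity
and commutativity up to isomorphism. Finally `X ≅ restrict_∅(X ∥ 0_∅)` for sourceless `X`, so
related graphs agree on membership in `L`.
-/

def mapAttach {n n' : ℕ} (f : Fin n → Fin n') :
    (a : Lab) × (Fin (ar a) → Fin n) → (a : Lab) × (Fin (ar a) → Fin n') :=
  fun p => ⟨p.1, f ∘ p.2⟩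

@[simp]
theorem mapAttach_id {n : ℕ} (p : (a : Lab) × (Fin (ar a) → Fin n)) : mapAttach id p = p := rfl

@[simp]
theorem mapAttach_mapAttach {n n' n'' : ℕ} (f : Fin n → Fin n') (g : Fin n' → Fin n'')
    (p : (a : Lab) × (Fin (ar a) → Fin n)) :
    mapAttach g (mapAttach f p) = mapAttach (g ∘ f) p := rfl

theorem GIso.of_edg_eq {G₁ G₂ : CG Lab ar} (hsrt : G₁.srt = G₂.srt)
    (ev : Fin G₁.n ≃ Fin G₂.n) (ee : Fin G₁.m ≃ Fin G₂.m)
    (hedg : ∀ e, G₂.edg (ee e) = mapAttach ev (G₁.edg e))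
    (hsrc : ∀ s (h₁ : s ∈ G₁.srt) (h₂ : s ∈ G₂.srt), ev (G₁.src ⟨s, h₁⟩) = G₂.src ⟨s, h₂⟩) :
    GIso G₁ G₂ :=
  ⟨hsrt, ev, ee, fun e => by rw [hedg]; exact ⟨rfl, HEq.rfl⟩, hsrc⟩

theorem GIso.exists_edg_eq {G₁ G₂ : CG Lab ar} (h : GIso G₁ G₂) :
    ∃ (ev : Fin G₁.n ≃ Fin G₂.n) (ee : Fin G₁.m ≃ Fin G₂.m),
      (∀ e, G₂.edg (ee e) = mapAttach ev (G₁.edg e)) ∧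
      ∀ s (h₁ : s ∈ G₁.srt) (h₂ : s ∈ G₂.srt), ev (G₁.src ⟨s, h₁⟩) = G₂.src ⟨s, h₂⟩ := by
  obtain ⟨-, ev, ee, hedg, hsrc⟩ := h
  exact ⟨ev, ee, fun e => Sigma.ext (hedg e).1 (hedg e).2, hsrc⟩

theorem GIso.symm {G₁ G₂ : CG Lab ar} (h : GIso G₁ G₂) : GIso G₂ G₁ := by
  obtain ⟨ev, ee, hedg, hsrc⟩ := h.exists_edg_eq
  refine .of_edg_eq h.1.symm ev.symm ee.symm (fun e => ?_) fun s h₂ h₁ => ?_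
  · have := congrArg (mapAttach ev.symm) (hedg (ee.symm e))
    rw [Equiv.apply_symm_apply, mapAttach_mapAttach, Equiv.symm_comp_self, mapAttach_id] at this
    exact this.symm
  · rw [← hsrc s h₁ h₂, Equiv.symm_apply_apply]

theorem GIso.trans {G₁ G₂ G₃ : CG Lab ar} (h : GIso G₁ G₂) (h' : GIso G₂ G₃) :
    GIso G₁ G₃ := by
  obtain ⟨ev, ee, hedg, hsrc⟩ := h.exists_edg_eq
  obtain ⟨ev', ee', hedg', hsrc'⟩ := h'.exists_edg_eq
  refine .of_edg_eq (h.1.trans h'.1) (ev.trans ev') (ee.trans ee') (fun e => ?_) fun s h₁ h₃ => ?_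
  · rw [Equiv.trans_apply, hedg', hedg, mapAttach_mapAttach]
    rfl
  · have h₂ : s ∈ G₂.srt := h.1 ▸ h₁
    rw [Equiv.trans_apply, hsrc s h₁ h₂, hsrc' s h₂ h₃]

theorem GIso.mem_iff {L : Set (CG Lab ar)} (hiso : IsoClosed L) {G₁ G₂ : CG Lab ar}
    (h : GIso G₁ G₂) : G₁ ∈ L ↔ G₂ ∈ L :=
  ⟨hiso G₁ G₂ h, hiso G₂ G₁ h.symm⟩

theorem GIso.crestrict (τ : Finset ℕ) {G₁ G₂ : CG Lab ar} (h : GIso G₁ G₂) :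
    GIso (crestrict τ G₁) (crestrict τ G₂) := by
  obtain ⟨hsrt, ev, ee, hedg, hsrc⟩ := h
  exact ⟨by rw [crestrict_srt, crestrict_srt, hsrt], ev, ee, hedg,
    fun s h₁ h₂ => hsrc s (Finset.mem_inter.mp h₁).1 (Finset.mem_inter.mp h₂).1⟩

theorem CG.ext_of_srt_eq_empty {G G' : CG Lab ar} (hn : G.n = G'.n) (hm : G.m = G'.m)
    (he : HEq G.edg G'.edg) (h : G.srt = ∅) (h' : G'.srt = ∅) : G = G' := by
  obtain ⟨n, m, edg, srt, src⟩ := G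
  obtain ⟨n', m', edg', srt', src'⟩ := G'
  dsimp only at hn hm he h h'
  subst hn hm h h'
  cases he
  congr
  funext s
  exact absurd s.2 (Finset.notMem_empty s.1)

section Composition

variable (A B : CG Lab ar)

/-- The vertex numbering used by `ccomp`. -/
def fuseEquiv : Quot (fuseRel A B) ≃ Fin (ccomp A B).n :=
  Finite.equivFin _

variable {A B}

def fuseLift {X : Sort*} (f : Fin A.n → X) (g : Fin B.n → X)
    (h : ∀ s (h₁ : s ∈ A.srt) (h₂ : s ∈ B.srt), f (A.src ⟨s, h₁⟩) = g (B.src ⟨s, h₂⟩)) :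
    Quot (fuseRel A B) → X :=
  Quot.lift (Sum.elim f g) (by rintro _ _ ⟨s, h₁, h₂, rfl, rfl⟩; exact h s h₁ h₂)

@[simp]
theorem fuseLift_mk_inl {X : Sort*} (f : Fin A.n → X) (g : Fin B.n → X) (h)
    (a : Fin A.n) : fuseLift f g h (Quot.mk _ (.inl a)) = f a := rfl

@[simp]
theorem fuseLift_mk_inr {X : Sort*} (f : Fin A.n → X) (g : Fin B.n → X) (h)
    (b : Fin B.n) : fuseLift f g h (Quot.mk _ (.inr b)) = g b := rfl

theorem quot_mk_inl_src_eq {s : ℕ} (h₁ : s ∈ A.srt) (h₂ : s ∈ B.srt) :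
    Quot.mk (fuseRel A B) (.inl (A.src ⟨s, h₁⟩)) = Quot.mk _ (.inr (B.src ⟨s, h₂⟩)) :=
  Quot.sound ⟨s, h₁, h₂, rfl, rfl⟩

theorem mem_ccomp_srt_left {s : ℕ} (h : s ∈ A.srt) : s ∈ (ccomp A B).srt :=
  Finset.mem_union_left _ h

theorem mem_ccomp_srt_right {s : ℕ} (h : s ∈ B.srt) : s ∈ (ccomp A B).srt :=
  Finset.mem_union_right _ h

theorem ccomp_src_of_mem_left {s : ℕ} (h : s ∈ (ccomp A B).srt) (h₁ : s ∈ A.srt) :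
    (ccomp A B).src ⟨s, h⟩ = fuseEquiv A B (Quot.mk _ (.inl (A.src ⟨s, h₁⟩))) := by
  simp only [ccomp, fuseEquiv, h₁, dite_true]
  rfl

theorem ccomp_src_of_mem_right {s : ℕ} (h : s ∈ (ccomp A B).srt) (h₂ : s ∈ B.srt) :
    (ccomp A B).src ⟨s, h⟩ = fuseEquiv A B (Quot.mk _ (.inr (B.src ⟨s, h₂⟩))) := by
  by_cases h₁ : s ∈ A.srt
  · rw [ccomp_src_of_mem_left h h₁, quot_mk_inl_src_eq h₁ h₂]
  · simp only [ccomp, fuseEquiv, h₁, dite_false]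
    rfl

theorem ccomp_edg_castAdd (i : Fin A.m) :
    (ccomp A B).edg (Fin.castAdd B.m i) =
      mapAttach (fun v => fuseEquiv A B (Quot.mk _ (.inl v))) (A.edg i) := by
  simp only [ccomp, finSumFinEquiv_symm_apply_castAdd]
  rfl

theorem ccomp_edg_natAdd (i : Fin B.m) :
    (ccomp A B).edg (Fin.natAdd A.m i) =
      mapAttach (fun v => fuseEquiv A B (Quot.mk _ (.inr v))) (B.edg i) := by
  simp only [ccomp, finSumFinEquiv_symm_apply_natAdd]
  rfl

end Composition

def fuseQuotComm (A B : CG Lab ar) : Quot (fuseRel A B) ≃ Quot (fuseRel B A) where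
  toFun := fuseLift (fun a => Quot.mk _ (.inr a)) (fun b => Quot.mk _ (.inl b))
    fun _ h₁ h₂ => (quot_mk_inl_src_eq h₂ h₁).symm
  invFun := fuseLift (fun b => Quot.mk _ (.inr b)) (fun a => Quot.mk _ (.inl a))
    fun _ h₁ h₂ => (quot_mk_inl_src_eq h₂ h₁).symm
  left_inv := by
    apply Quot.ind
    rintro (a | b) <;> rfl
  right_inv := by
    apply Quot.ind
    rintro (b | a) <;> rfl

theorem ccomp_edg_finAddFlip (A B : CG Lab ar) (e : Fin (A.m + B.m)) :
    (ccomp B A).edg (finAddFlip e) =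
      mapAttach ((fuseEquiv A B).symm.trans ((fuseQuotComm A B).trans (fuseEquiv B A)))
        ((ccomp A B).edg e) := by
  induction e using Fin.addCases <;>
  · simp only [finAddFlip_apply_castAdd, finAddFlip_apply_natAdd, ccomp_edg_castAdd,
      ccomp_edg_natAdd, mapAttach_mapAttach, Function.comp_def, Equiv.trans_apply,
      Equiv.symm_apply_apply]
    rfl

theorem ccomp_comm (A B : CG Lab ar) : GIso (ccomp A B) (ccomp B A) := by
  refine .of_edg_eq (Finset.union_comm _ _) _ finAddFlip (ccomp_edg_finAddFlip A B)
    fun s h₁ h₂ => ?_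
  by_cases ha : s ∈ A.srt
  · rw [ccomp_src_of_mem_left h₁ ha, ccomp_src_of_mem_right h₂ ha]
    simp only [Equiv.trans_apply, Equiv.symm_apply_apply]
    rfl
  · have hb : s ∈ B.srt := (Finset.mem_union.mp h₁).resolve_left ha
    rw [ccomp_src_of_mem_right h₁ hb, ccomp_src_of_mem_left h₂ hb]
    simp only [Equiv.trans_apply, Equiv.symm_apply_apply]
    rfl

def fuseQuotCzero (A : CG Lab ar) : Quot (fuseRel A (czero ∅)) ≃ Fin A.n where
  toFun := fuseLift id Fin.elim0 fun s _ h₂ => absurd h₂ (Finset.notMem_empty s)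
  invFun v := Quot.mk _ (.inl v)
  left_inv := by
    apply Quot.ind
    rintro (v | c)
    · rfl
    · exact Fin.elim0 c
  right_inv _ := rfl

theorem ccomp_czero (A : CG Lab ar) : GIso (ccomp A (czero ∅)) A := by
  refine .of_edg_eq (Finset.union_empty _) ((fuseEquiv A _).symm.trans (fuseQuotCzero A))
    (finCongr (Nat.add_zero A.m)) ?_ ?_
  · intro e
    induction e using Fin.addCases with
    | left i =>
      rw [ccomp_edg_castAdd, mapAttach_mapAttach]
      simp only [Function.comp_def, Equiv.trans_apply, Equiv.symm_apply_apply]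
      rfl
    | right c => exact Fin.elim0 c
  · intro s h₁ h₂
    rw [ccomp_src_of_mem_left h₁ h₂]
    simp only [Equiv.trans_apply, Equiv.symm_apply_apply]
    rfl

section Assoc

variable (A B C : CG Lab ar)

/- The vertices of `(A ∥ B) ∥ C` and of `A ∥ (B ∥ C)` are classes of `A ⊔ B ⊔ C` under the two
nestings of the fusion; the maps below move representatives from one nesting to the other. -/

def fuseQuotAssocLeft : Quot (fuseRel A B) → Quot (fuseRel A (ccomp B C)) :=
  fuseLift (fun a => Quot.mk _ (.inl a))
    (fun b => Quot.mk _ (.inr (fuseEquiv B C (Quot.mk _ (.inl b)))))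
    fun _ h₁ h₂ => by
      rw [← ccomp_src_of_mem_left (mem_ccomp_srt_left h₂) h₂]
      exact quot_mk_inl_src_eq h₁ _

def fuseQuotAssocRight : Quot (fuseRel B C) → Quot (fuseRel (ccomp A B) C) :=
  fuseLift (fun b => Quot.mk _ (.inl (fuseEquiv A B (Quot.mk _ (.inr b)))))
    (fun c => Quot.mk _ (.inr c))
    fun _ h₂ h₃ => by
      rw [← ccomp_src_of_mem_right (mem_ccomp_srt_right h₂) h₂]
      exact quot_mk_inl_src_eq _ h₃

def fuseQuotAssocFun : Quot (fuseRel (ccomp A B) C) → Quot (fuseRel A (ccomp B C)) :=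
  fuseLift (fuseQuotAssocLeft A B C ∘ (fuseEquiv A B).symm)
    (fun c => Quot.mk _ (.inr (fuseEquiv B C (Quot.mk _ (.inr c))))) fun s h₁₂ h₃ => by
      rw [← ccomp_src_of_mem_right (mem_ccomp_srt_right h₃) h₃]
      rcases Finset.mem_union.mp h₁₂ with h₁ | h₂
      · rw [ccomp_src_of_mem_left h₁₂ h₁]
        simpa [fuseQuotAssocLeft] using quot_mk_inl_src_eq h₁ _
      · rw [ccomp_src_of_mem_right h₁₂ h₂, ccomp_src_of_mem_left _ h₂]
        simp [fuseQuotAssocLeft]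

def fuseQuotAssocInv : Quot (fuseRel A (ccomp B C)) → Quot (fuseRel (ccomp A B) C) :=
  fuseLift (fun a => Quot.mk _ (.inl (fuseEquiv A B (Quot.mk _ (.inl a)))))
    (fuseQuotAssocRight A B C ∘ (fuseEquiv B C).symm) fun s h₁ h₂₃ => by
      rw [← ccomp_src_of_mem_left (mem_ccomp_srt_left h₁) h₁]
      rcases Finset.mem_union.mp h₂₃ with h₂ | h₃
      · rw [ccomp_src_of_mem_left h₂₃ h₂, ccomp_src_of_mem_right _ h₂]
        simp [fuseQuotAssocRight]
      · rw [ccomp_src_of_mem_right h₂₃ h₃]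
        simpa [fuseQuotAssocRight] using quot_mk_inl_src_eq _ h₃

def fuseQuotAssoc : Quot (fuseRel (ccomp A B) C) ≃ Quot (fuseRel A (ccomp B C)) where
  toFun := fuseQuotAssocFun A B C
  invFun := fuseQuotAssocInv A B C
  left_inv := by
    apply Quot.ind
    rintro (v | c)
    · obtain ⟨q, rfl⟩ := (fuseEquiv A B).surjective v
      induction q using Quot.ind with
      | mk x =>
        rcases x with a | b <;>
          simp [fuseQuotAssocFun, fuseQuotAssocInv, fuseQuotAssocLeft, fuseQuotAssocRight]
    · simp [fuseQuotAssocFun, fuseQuotAssocInv, fuseQuotAssocRight]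
  right_inv := by
    apply Quot.ind
    rintro (a | v)
    · simp [fuseQuotAssocFun, fuseQuotAssocInv, fuseQuotAssocLeft]
    · obtain ⟨q, rfl⟩ := (fuseEquiv B C).surjective v
      induction q using Quot.ind with
      | mk x =>
        rcases x with b | c <;>
          simp [fuseQuotAssocFun, fuseQuotAssocInv, fuseQuotAssocLeft, fuseQuotAssocRight]

/-- Stated with `(ccomp _ _).m`, the types on which the edge lemmas `ccomp_edg_*` are keyed. -/
theorem ccomp_m_assoc : (ccomp A B).m + C.m = A.m + (ccomp B C).m :=
  Nat.add_assoc A.m B.m C.m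

theorem fuseQuotAssoc_mk_inl_fuseEquiv (q : Quot (fuseRel A B)) :
    fuseQuotAssoc A B C (Quot.mk _ (.inl (fuseEquiv A B q))) = fuseQuotAssocLeft A B C q :=
  congrArg (fuseQuotAssocLeft A B C) ((fuseEquiv A B).symm_apply_apply q)

theorem ccomp_edg_assoc (e : Fin ((ccomp A B).m + C.m)) :
    (ccomp A (ccomp B C)).edg (finCongr (ccomp_m_assoc A B C) e) =
      mapAttach ((fuseEquiv (ccomp A B) C).symm.trans
        ((fuseQuotAssoc A B C).trans (fuseEquiv A (ccomp B C)))) ((ccomp (ccomp A B) C).edg e) := by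
  induction e using Fin.addCases with
  | left e =>
    rw [ccomp_edg_castAdd, mapAttach_mapAttach]
    induction e using Fin.addCases with
    | left a =>
      rw [show finCongr (ccomp_m_assoc A B C) (Fin.castAdd C.m (Fin.castAdd B.m a)) =
        Fin.castAdd (ccomp B C).m a from Fin.ext rfl]
      simp only [ccomp_edg_castAdd, mapAttach_mapAttach, Function.comp_def, Equiv.trans_apply,
        Equiv.symm_apply_apply, fuseQuotAssoc_mk_inl_fuseEquiv]
      rfl
    | right b =>
      rw [show finCongr (ccomp_m_assoc A B C) (Fin.castAdd C.m (Fin.natAdd A.m b)) =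
        Fin.natAdd (m := (ccomp B C).m) A.m (Fin.castAdd C.m b) from Fin.ext rfl,
        ccomp_edg_natAdd (B := ccomp B C) (Fin.castAdd C.m b), ccomp_edg_castAdd,
        mapAttach_mapAttach, ccomp_edg_natAdd, mapAttach_mapAttach]
      simp only [Function.comp_def, Equiv.trans_apply, Equiv.symm_apply_apply,
        fuseQuotAssoc_mk_inl_fuseEquiv]
      rfl
  | right c =>
    rw [show finCongr (ccomp_m_assoc A B C) (Fin.natAdd (ccomp A B).m c) =
      Fin.natAdd (m := (ccomp B C).m) A.m (Fin.natAdd B.m c) from Fin.ext (Nat.add_assoc _ _ _),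
      ccomp_edg_natAdd (B := ccomp B C) (Fin.natAdd B.m c), ccomp_edg_natAdd, mapAttach_mapAttach,
      ccomp_edg_natAdd, mapAttach_mapAttach]
    simp only [Function.comp_def, Equiv.trans_apply, Equiv.symm_apply_apply]
    rfl

theorem ccomp_assoc : GIso (ccomp (ccomp A B) C) (ccomp A (ccomp B C)) := by
  refine .of_edg_eq (Finset.union_assoc _ _ _) _ (finCongr (ccomp_m_assoc A B C))
    (ccomp_edg_assoc A B C) fun s h₁ h₂ => ?_
  simp only [Equiv.trans_apply]
  rcases Finset.mem_union.mp h₁ with h₁₂ | h₃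
  · rcases Finset.mem_union.mp h₁₂ with ha | hb
    · rw [ccomp_src_of_mem_left h₁ h₁₂, Equiv.symm_apply_apply, ccomp_src_of_mem_left h₁₂ ha,
        fuseQuotAssoc_mk_inl_fuseEquiv, ccomp_src_of_mem_left h₂ ha]
      rfl
    · rw [ccomp_src_of_mem_left h₁ h₁₂, Equiv.symm_apply_apply, ccomp_src_of_mem_right h₁₂ hb,
        fuseQuotAssoc_mk_inl_fuseEquiv, ccomp_src_of_mem_right h₂ (mem_ccomp_srt_left hb),
        ccomp_src_of_mem_left _ hb]
      rfl
  · rw [ccomp_src_of_mem_right h₁ h₃, Equiv.symm_apply_apply,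
      ccomp_src_of_mem_right h₂ (mem_ccomp_srt_right h₃), ccomp_src_of_mem_right _ h₃]
    rfl

end Assoc

theorem crestrict_giso_self {τ : Finset ℕ} {G : CG Lab ar} (h : G.srt ⊆ τ) :
    GIso (crestrict τ G) G :=
  .of_edg_eq (Finset.inter_eq_left.mpr h) (Equiv.refl _) (Equiv.refl _) (fun _ => rfl)
    fun _ _ _ => rfl

theorem mem_crename_srt {α : Equiv.Perm ℕ} {G : CG Lab ar} {s : ℕ} :
    s ∈ (crename α G).srt ↔ α s ∈ G.srt := by
  rw [crename_srt, Finset.mem_image]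
  exact ⟨fun ⟨y, hy, he⟩ => by rwa [← he, Equiv.apply_symm_apply],
    fun h => ⟨α s, h, Equiv.symm_apply_apply α s⟩⟩

theorem exists_perm_fix_avoid (F D A : Finset ℕ) (hDF : Disjoint D F) :
    ∃ α : Equiv.Perm ℕ, (∀ x ∈ F, α x = x) ∧ ∀ x ∈ D, α x ∉ A := by
  obtain ⟨N, hN⟩ : ∃ N, ∀ x ∈ D ∪ F ∪ A, x < N :=
    ⟨(D ∪ F ∪ A).sup id + 1, fun x hx => Nat.lt_succ_of_le (Finset.le_sup (f := id) hx)⟩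
  -- shift `D` by `N` beyond every label in sight, and back
  let f : ℕ → ℕ := fun x => if x ∈ D then x + N else if N ≤ x ∧ x - N ∈ D then x - N else x
  have hf : Function.Involutive f := by
    intro x
    by_cases hx : x ∈ D
    · have : x + N ∉ D := fun h => by
        have := hN (x + N) (Finset.mem_union_left _ (Finset.mem_union_left _ h)); omega
      simp [f, hx, this]
    · by_cases hx' : N ≤ x ∧ x - N ∈ D
      · simp only [f, hx, hx', if_false, if_true, and_self]
        omega
      · simp [f, hx, hx']
  refine ⟨hf.toPerm f, fun x hx => ?_, fun x hx hA => ?_⟩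
  · have : x < N := hN x (by simp [hx])
    simp [f, Finset.disjoint_right.mp hDF hx]
    omega
  · have := hN (f x) (Finset.mem_union_right _ hA)
    simp [f, hx] at this

/-- A sourceless restriction of `A ∥ B` depends only on the edges of `A` and `B` and on
`fuseRel A B` (`crestrict_ccomp_eq_glue`). -/
def glue {n₁ m₁ n₂ m₂ : ℕ} (edg₁ : Fin m₁ → (a : Lab) × (Fin (ar a) → Fin n₁))
    (edg₂ : Fin m₂ → (a : Lab) × (Fin (ar a) → Fin n₂))
    (r : (Fin n₁ ⊕ Fin n₂) → (Fin n₁ ⊕ Fin n₂) → Prop) : CG Lab ar where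
  n := Nat.card (Quot r)
  m := m₁ + m₂
  edg i :=
    match finSumFinEquiv.symm i with
    | Sum.inl e₁ =>
      ⟨(edg₁ e₁).1, fun j => Finite.equivFin (Quot r) (Quot.mk _ (.inl ((edg₁ e₁).2 j)))⟩
    | Sum.inr e₂ =>
      ⟨(edg₂ e₂).1, fun j => Finite.equivFin (Quot r) (Quot.mk _ (.inr ((edg₂ e₂).2 j)))⟩
  srt := ∅
  src s := absurd s.2 (Finset.notMem_empty s.1)

theorem crestrict_ccomp_eq_glue {A B : CG Lab ar} {τ : Finset ℕ}
    (h : (A.srt ∪ B.srt) ∩ τ = ∅) :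
    crestrict τ (ccomp A B) = glue A.edg B.edg (fuseRel A B) :=
  CG.ext_of_srt_eq_empty rfl rfl (heq_of_eq (funext fun i => by
    simp only [crestrict, ccomp, glue]
    split <;> rename_i h' <;> simp only [h'])) h rfl

theorem crestrict_ccomp_eq_crestrict_empty {A B : CG Lab ar} {τ : Finset ℕ}
    (h : (A.srt ∪ B.srt) ∩ τ = ∅) : crestrict τ (ccomp A B) = crestrict ∅ (ccomp A B) := by
  rw [crestrict_ccomp_eq_glue h, crestrict_ccomp_eq_glue (Finset.inter_empty _)]

theorem fuseRel_crestrict {H G : CG Lab ar} {σ : Finset ℕ} {α : Equiv.Perm ℕ}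
    (hfix : ∀ s ∈ H.srt ∩ σ, α s = s) (hmove : ∀ s ∈ H.srt \ σ, α s ∉ G.srt) :
    fuseRel (crestrict σ H) G = fuseRel H (crename α G) := by
  ext x y
  constructor
  · rintro ⟨s, h₁, h₂, rfl, rfl⟩
    have hα := hfix s h₁
    exact ⟨s, (Finset.mem_inter.mp h₁).1, mem_crename_srt.mpr (by rwa [hα]), rfl,
      congrArg (Sum.inr ∘ G.src) (Subtype.ext hα.symm)⟩
  · rintro ⟨s, h₁, h₂, rfl, rfl⟩
    have hσ : s ∈ σ := by
      by_contra hσ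
      exact hmove s (Finset.mem_sdiff.mpr ⟨h₁, hσ⟩) (mem_crename_srt.mp h₂)
    have hα := hfix s (Finset.mem_inter.mpr ⟨h₁, hσ⟩)
    exact ⟨s, Finset.mem_inter.mpr ⟨h₁, hσ⟩, hα ▸ mem_crename_srt.mp h₂, rfl,
      congrArg (Sum.inr ∘ G.src) (Subtype.ext hα)⟩

theorem fuseRel_crename (H G : CG Lab ar) (β : Equiv.Perm ℕ) :
    fuseRel (crename β H) G = fuseRel H (crename β.symm G) := by
  ext x y
  constructor
  · rintro ⟨s, h₁, h₂, rfl, rfl⟩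
    refine ⟨β s, mem_crename_srt.mp h₁, mem_crename_srt.mpr (by simpa using h₂), rfl, ?_⟩
    exact congrArg (Sum.inr ∘ G.src) (Subtype.ext (β.symm_apply_apply s).symm)
  · rintro ⟨t, h₁, h₂, rfl, rfl⟩
    refine ⟨β.symm t, mem_crename_srt.mpr (by simpa using h₁), mem_crename_srt.mp h₂, ?_, rfl⟩
    exact congrArg (Sum.inl ∘ H.src) (Subtype.ext (β.apply_symm_apply t).symm)

theorem crestrict_empty_ccomp_crestrict {H G : CG Lab ar} {σ : Finset ℕ} {α : Equiv.Perm ℕ}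
    (hfix : ∀ s ∈ H.srt ∩ σ, α s = s) (hmove : ∀ s ∈ H.srt \ σ, α s ∉ G.srt) :
    crestrict ∅ (ccomp (crestrict σ H) G) = crestrict ∅ (ccomp H (crename α G)) := by
  rw [crestrict_ccomp_eq_glue (Finset.inter_empty _),
    crestrict_ccomp_eq_glue (Finset.inter_empty _)]
  exact congrArg (glue H.edg G.edg) (fuseRel_crestrict hfix hmove)

theorem crestrict_empty_ccomp_crename (H G : CG Lab ar) (β : Equiv.Perm ℕ) :
    crestrict ∅ (ccomp (crename β H) G) = crestrict ∅ (ccomp H (crename β.symm G)) := by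
  rw [crestrict_ccomp_eq_glue (Finset.inter_empty _),
    crestrict_ccomp_eq_glue (Finset.inter_empty _)]
  exact congrArg (glue H.edg G.edg) (fuseRel_crename H G β)

def ParEquiv (L : Set (CG Lab ar)) (X Y : CG Lab ar) : Prop :=
  X.srt = Y.srt ∧ ∀ G : CG Lab ar, crestrict ∅ (ccomp X G) ∈ L ↔ crestrict ∅ (ccomp Y G) ∈ L

namespace ParEquiv

variable {L : Set (CG Lab ar)}

theorem iff_forall_crestrict_ccomp (hsf : ∀ G ∈ L, G.srt = ∅) {X Y : CG Lab ar} :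
    ParEquiv L X Y ↔ X.srt = Y.srt ∧ ∀ (G : CG Lab ar) (τ : Finset ℕ),
      (crestrict τ (ccomp X G) ∈ L ↔ crestrict τ (ccomp Y G) ∈ L) := by
  refine ⟨fun h => ⟨h.1, fun G τ => ?_⟩, fun h => ⟨h.1, fun G => h.2 G ∅⟩⟩
  by_cases hS : (X.srt ∪ G.srt) ∩ τ = ∅
  · rw [crestrict_ccomp_eq_crestrict_empty hS,
      crestrict_ccomp_eq_crestrict_empty (A := Y) (by rwa [← h.1])]
    exact h.2 G
  · exact iff_of_false (fun hm => hS (hsf _ hm)) fun hm => hS (h.1 ▸ hsf _ hm)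

theorem refl (X : CG Lab ar) : ParEquiv L X X :=
  ⟨rfl, fun _ => Iff.rfl⟩

theorem trans {X Y Z : CG Lab ar} (h : ParEquiv L X Y) (h' : ParEquiv L Y Z) :
    ParEquiv L X Z :=
  ⟨h.1.trans h'.1, fun G => (h.2 G).trans (h'.2 G)⟩

theorem restrict {X Y : CG Lab ar} (σ : Finset ℕ) (h : ParEquiv L X Y) :
    ParEquiv L (crestrict σ X) (crestrict σ Y) := by
  refine ⟨by rw [crestrict_srt, crestrict_srt, h.1], fun G => ?_⟩
  obtain ⟨α, hfix, hmove⟩ :=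
    exists_perm_fix_avoid (X.srt ∩ σ) (X.srt \ σ) G.srt (Finset.disjoint_sdiff_inter _ _)
  rw [crestrict_empty_ccomp_crestrict hfix hmove,
    crestrict_empty_ccomp_crestrict (h.1 ▸ hfix) (h.1 ▸ hmove)]
  exact h.2 _

theorem rename {X Y : CG Lab ar} (β : Equiv.Perm ℕ) (h : ParEquiv L X Y) :
    ParEquiv L (crename β X) (crename β Y) := by
  refine ⟨by rw [crename_srt, crename_srt, h.1], fun G => ?_⟩
  rw [crestrict_empty_ccomp_crename, crestrict_empty_ccomp_crename]
  exact h.2 _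

theorem comp_right (hiso : IsoClosed L) {X Y : CG Lab ar} (h : ParEquiv L X Y)
    (Z : CG Lab ar) : ParEquiv L (ccomp X Z) (ccomp Y Z) := by
  refine ⟨by rw [ccomp_srt, ccomp_srt, h.1], fun G => ?_⟩
  have hassoc (W : CG Lab ar) := ((ccomp_assoc W Z G).crestrict ∅).mem_iff hiso
  exact (hassoc X).trans ((h.2 _).trans (hassoc Y).symm)

theorem comp_left (hiso : IsoClosed L) (Z : CG Lab ar) {X Y : CG Lab ar}
    (h : ParEquiv L X Y) : ParEquiv L (ccomp Z X) (ccomp Z Y) := by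
  refine ⟨by rw [ccomp_srt, ccomp_srt, h.1], fun G => ?_⟩
  have hrot (W : CG Lab ar) := (((ccomp_assoc Z W G).trans
    ((ccomp_comm Z (ccomp W G)).trans (ccomp_assoc W G Z))).crestrict ∅).mem_iff hiso
  exact (hrot X).trans ((h.2 _).trans (hrot Y).symm)

theorem comp (hiso : IsoClosed L) {X₁ Y₁ X₂ Y₂ : CG Lab ar} (h₁ : ParEquiv L X₁ Y₁)
    (h₂ : ParEquiv L X₂ Y₂) : ParEquiv L (ccomp X₁ X₂) (ccomp Y₁ Y₂) :=
  (h₁.comp_right hiso X₂).trans (h₂.comp_left hiso Y₁)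

theorem ctx_apply (hiso : IsoClosed L) {X Y : CG Lab ar} (h : ParEquiv L X Y) :
    ∀ c : HRCtx Lab ar, ParEquiv L (c.apply X) (c.apply Y)
  | .hole => h
  | .const _ | .zero _ | .edge _ _ => refl _
  | .restrict σ c => (ctx_apply hiso h c).restrict σ
  | .rename β _ c => (ctx_apply hiso h c).rename β
  | .comp c₁ c₂ => (ctx_apply hiso h c₁).comp hiso (ctx_apply hiso h c₂)

theorem mem_iff (hsf : ∀ G ∈ L, G.srt = ∅) (hiso : IsoClosed L) {X Y : CG Lab ar}
    (h : ParEquiv L X Y) : X ∈ L ↔ Y ∈ L := by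
  by_cases hX : X.srt = ∅
  · have hunit {Z : CG Lab ar} (hZ : Z.srt = ∅) : Z ∈ L ↔ crestrict ∅ (ccomp Z (czero ∅)) ∈ L :=
      (((ccomp_czero Z).crestrict ∅).trans (crestrict_giso_self hZ.subset)).mem_iff hiso |>.symm
    exact (hunit hX).trans ((h.2 _).trans (hunit (h.1 ▸ hX)).symm)
  · exact iff_of_false (fun hm => hX (hsf _ hm)) fun hm => hX (h.1.trans (hsf _ hm))

end ParEquiv

/-- For a set `L` of graphs with no sources, `G₁` and `G₂` are
equivalent under the syntactic congruence of `L` in the HR graph algebra iff they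
have the same sort and for every graph `G` and finite sort `τ`,
`restrict_τ(G₁ ∥ G) ∈ L ⟺ restrict_τ(G₂ ∥ G) ∈ L`. -/
theorem syntactic_congruence_characterization_sourceless {Lab : Type} {ar : Lab → ℕ}
    (L : Set (CG Lab ar)) (hsf : ∀ G ∈ L, G.srt = ∅) (hiso : IsoClosed L)
    (G₁ G₂ : CG Lab ar) :
    SynCongHR L G₁ G₂ ↔
      (G₁.srt = G₂.srt ∧ ∀ (G : CG Lab ar) (τ : Finset ℕ),
        (crestrict τ (ccomp G₁ G) ∈ L ↔ crestrict τ (ccomp G₂ G) ∈ L)) := by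
  refine ⟨fun ⟨hsrt, hctx⟩ => ⟨hsrt, fun G τ => hctx (.restrict τ (.comp .hole (.const G)))⟩,
    fun h => ?_⟩
  have hpar := (ParEquiv.iff_forall_crestrict_ccomp hsf).mpr h
  exact ⟨h.1, fun c => (hpar.ctx_apply hiso c).mem_iff hsf hiso⟩

end

end GraphCF
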